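/- Let K be a field and let ρ, μ, ν be valuations on K[y] such that ρ < μ, ρ < ν, μ(f) ≤ ν(f) for all f ∈ K[y], and the set of strictly positive values taken by ρ is well-ordered. Suppose Q ∈ Φ_ρ(ν) satisfies ν(Q) = β_ρ(ν) and μ(Q) = ν(Q). Then d_ρ(μ) = d_ρ(ν), the set Ψ_ρ(μ) has least element μ(Q) (so β_ρ(μ) = β_ρ(ν)), and the truncations of μ and of ν with respect to Q coincide: μ_Q(f) = ν_Q(f) for every f ∈ K[y]. -/

import Mathlib

open Polynomial

/-- A valuation on the polynomial ring `K[y]`: a function `ν : K[y] → ℝ ∪ {∞}`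
(modelled as `EReal`, never taking the value `⊥ = -∞`) with `ν(fg) = ν f + ν g`,
`ν(f+g) ≥ min (ν f) (ν g)`, `ν 1 = 0` and `ν 0 = ∞`. -/
structure PolyValuation (K : Type*) [Field K] where
  v : Polynomial K → EReal
  ne_bot : ∀ f : Polynomial K, v f ≠ ⊥
  map_mul : ∀ f g : Polynomial K, v (f * g) = v f + v g
  add_ge : ∀ f g : Polynomial K, min (v f) (v g) ≤ v (f + g)
  map_one : v 1 = 0
  map_zero : v 0 = ⊤

variable {K : Type*} [Field K]

/-- `ε_ν(P) := sup_{b ≥ 1} (ν(P) − ν(∂_b P))/b`, where `∂_b` is the `b`-th Hasse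
derivative with respect to `y`; computed in `ℝ ∪ {±∞}`. -/
noncomputable def eps (ν : PolyValuation K) (P : Polynomial K) : EReal :=
  ⨆ b ∈ {b : ℕ | 1 ≤ b}, (ν.v P - ν.v (Polynomial.hasseDeriv b P)) / (b : EReal)

/-- A key polynomial for `ν`: a monic polynomial `Q` with `ν(Q) ≥ ν(y)` such that
every `f` with `ε_ν(f) ≥ ε_ν(Q)` satisfies `deg f ≥ deg Q`. -/
def IsKeyPoly (ν : PolyValuation K) (Q : Polynomial K) : Prop :=
  Q.Monic ∧ ν.v Polynomial.X ≤ ν.v Q ∧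
    ∀ f : Polynomial K, eps ν Q ≤ eps ν f → Q.natDegree ≤ f.natDegree

/-- `w` is the truncation `ν_Q` of `ν` with respect to the monic polynomial `Q`:
whenever `g = Σ_{j=0}^{s} c_j Q^j` is a `Q`-expansion (all `deg c_j < deg Q`),
`w g = min_j ν(c_j Q^j)`. -/
def IsTruncation (ν : PolyValuation K) (Q : Polynomial K)
    (w : Polynomial K → EReal) : Prop :=
  ∀ (g : Polynomial K) (s : ℕ) (c : ℕ → Polynomial K),
    (∀ j ≤ s, (c j).degree < Q.degree) →
    g = ∑ j ∈ Finset.range (s + 1), c j * Q ^ j →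
    w g = Finset.inf (Finset.range (s + 1)) (fun j => ν.v (c j * Q ^ j))

/-- The value group of `w`: the subgroup of `(ℝ, +)` generated by the finite values
`w f`, `f ≠ 0`. -/
def valueGroup (w : Polynomial K → EReal) : AddSubgroup ℝ :=
  AddSubgroup.closure {x : ℝ | ∃ f : Polynomial K, f ≠ 0 ∧ w f = (x : EReal)}

/-- The set of strictly positive values taken by `μ` is well-ordered. -/
def PosValuesWF (μ : PolyValuation K) : Prop :=
  {x : EReal | 0 < x ∧ ∃ f : Polynomial K, μ.v f = x}.IsWF

/-- `d_μ(ν)`: the minimal degree of a monic polynomial `f` with `μ(f) < ν(f)`. -/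
noncomputable def dmn (μ ν : PolyValuation K) : ℕ :=
  sInf {n : ℕ | ∃ f : Polynomial K, f.Monic ∧ f.natDegree = n ∧ μ.v f < ν.v f}

/-- `Φ_μ(ν)`: monic polynomials of degree `d_μ(ν)` with `μ(Q) < ν(Q)`. -/
def Phi (μ ν : PolyValuation K) : Set (Polynomial K) :=
  {Q : Polynomial K | Q.Monic ∧ Q.natDegree = dmn μ ν ∧ μ.v Q < ν.v Q}

/-- `Ψ_μ(ν) = ν(Φ_μ(ν))`. -/
def Psi (μ ν : PolyValuation K) : Set EReal :=
  (fun Q => ν.v Q) '' Phi μ ν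

/-- `β_μ(ν)`: the least element of `Ψ_μ(ν)`. -/
noncomputable def betaMN (μ ν : PolyValuation K) : EReal :=
  sInf (Psi μ ν)

/-! ### Auxiliary lemmas -/

private lemma ereal_add_self_eq_zero {x : EReal} (hb : x ≠ ⊥) (h : x + x = 0) : x = 0 := by
  induction x with
  | bot => exact absurd rfl hb
  | coe r =>
    have : (r + r : ℝ) = (0 : ℝ) := by exact_mod_cast h
    have : r = 0 := by linarith
    exact_mod_cast this
  | top => simp at h

private lemma val_unit_eq (w₁ w₂ : PolyValuation K)
    (h : ∀ f : Polynomial K, w₁.v f ≤ w₂.v f) {f g : Polynomial K} (hfg : f * g = 1) :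
    w₁.v f = w₂.v f := by
  have h1 : w₁.v f + w₁.v g = 0 := by rw [← w₁.map_mul, hfg, w₁.map_one]
  have h2 : w₂.v f + w₂.v g = 0 := by rw [← w₂.map_mul, hfg, w₂.map_one]
  have hfb := w₁.ne_bot f; have hgb := w₁.ne_bot g
  have hfb2 := w₂.ne_bot f; have hgb2 := w₂.ne_bot g
  -- none of the values can be ⊤
  have hft : w₁.v f ≠ ⊤ := by
    intro ht; rw [ht, EReal.top_add_of_ne_bot hgb] at h1; simp at h1
  have hgt : w₁.v g ≠ ⊤ := by
    intro ht; rw [ht, add_comm, EReal.top_add_of_ne_bot hfb] at h1; simp at h1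
  have hft2 : w₂.v f ≠ ⊤ := by
    intro ht; rw [ht, EReal.top_add_of_ne_bot hgb2] at h2; simp at h2
  have hgt2 : w₂.v g ≠ ⊤ := by
    intro ht; rw [ht, add_comm, EReal.top_add_of_ne_bot hfb2] at h2; simp at h2
  obtain ⟨a, ha⟩ : ∃ a : ℝ, w₁.v f = (a : EReal) := ⟨_, (EReal.coe_toReal hft hfb).symm⟩
  obtain ⟨b, hbb⟩ : ∃ b : ℝ, w₁.v g = (b : EReal) := ⟨_, (EReal.coe_toReal hgt hgb).symm⟩
  obtain ⟨a', ha'⟩ : ∃ a : ℝ, w₂.v f = (a : EReal) := ⟨_, (EReal.coe_toReal hft2 hfb2).symm⟩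
  obtain ⟨b', hb'⟩ : ∃ b : ℝ, w₂.v g = (b : EReal) := ⟨_, (EReal.coe_toReal hgt2 hgb2).symm⟩
  rw [ha, hbb] at h1; rw [ha', hb'] at h2
  have hle1 : a ≤ a' := by have := h f; rw [ha, ha'] at this; exact_mod_cast this
  have hle2 : b ≤ b' := by have := h g; rw [hbb, hb'] at this; exact_mod_cast this
  have e1 : a + b = 0 := by exact_mod_cast h1
  have e2 : a' + b' = 0 := by exact_mod_cast h2
  rw [ha, ha']; norm_cast; linarith

private lemma val_neg (w : PolyValuation K) (f : Polynomial K) : w.v (-f) = w.v f := by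
  have hm : w.v (-1 : Polynomial K) = 0 := by
    apply ereal_add_self_eq_zero (w.ne_bot _)
    rw [← w.map_mul]; norm_num; exact w.map_one
  calc w.v (-f) = w.v ((-1) * f) := by ring_nf
    _ = w.v (-1) + w.v f := w.map_mul _ _
    _ = w.v f := by rw [hm, zero_add]

/-- Low-degree polynomials have equal value under comparable valuations. -/
private lemma low_deg_eq (ρ ν : PolyValuation K)
    (hρν : ∀ f : Polynomial K, ρ.v f ≤ ν.v f)
    (f : Polynomial K) (hf : f.natDegree < dmn ρ ν) : ρ.v f = ν.v f := by
  rcases eq_or_ne f 0 with rfl | hf0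
  · rw [ρ.map_zero, ν.map_zero]
  · set a := f.leadingCoeff with ha
    have ha0 : a ≠ 0 := leadingCoeff_ne_zero.mpr hf0
    set g := f * C a⁻¹ with hg
    have hgm : g.Monic := monic_mul_leadingCoeff_inv hf0
    have hgd : g.natDegree = f.natDegree := natDegree_mul_C (inv_ne_zero ha0)
    have hgeq : ρ.v g = ν.v g := by
      by_contra hne
      have hlt : ρ.v g < ν.v g := lt_of_le_of_ne (hρν g) hne
      have : dmn ρ ν ≤ g.natDegree := Nat.sInf_le ⟨g, hgm, rfl, hlt⟩
      omega
    have hfg : f = g * C a := by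
      rw [hg, mul_assoc, ← C_mul, inv_mul_cancel₀ ha0, C_1, mul_one]
    have hCa : ρ.v (C a) = ν.v (C a) := by
      apply val_unit_eq ρ ν hρν (g := C a⁻¹)
      rw [← C_mul, mul_inv_cancel₀ ha0, C_1]
    rw [hfg, ρ.map_mul, ν.map_mul, hgeq, hCa]

/-- Existence of the `Q`-expansion. -/
private lemma exists_expansion_aux (Q : Polynomial K) (hQ : Q.Monic) (hd : 0 < Q.natDegree) :
    ∀ s : ℕ, ∀ f : Polynomial K, f.natDegree < (s + 1) * Q.natDegree →
    ∃ c : ℕ → Polynomial K, (∀ j ≤ s, (c j).degree < Q.degree) ∧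
      f = ∑ j ∈ Finset.range (s + 1), c j * Q ^ j := by
  intro s
  induction s with
  | zero =>
    intro f hf
    refine ⟨fun _ => f, ?_, by simp⟩
    intro j _
    rcases eq_or_ne f 0 with rfl | hf0
    · simpa using (by simpa [Polynomial.degree_eq_natDegree hQ.ne_zero] using
        (bot_lt_iff_ne_bot.mpr (by simp) : (⊥ : WithBot ℕ) < (Q.natDegree : WithBot ℕ)))
    · exact degree_lt_degree (by simpa using hf)
  | succ s ih =>
    intro f hf
    have hq : (f /ₘ Q).natDegree < (s + 1) * Q.natDegree := by
      rw [natDegree_divByMonic f hQ]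
      have h2 : (s + 1 + 1) * Q.natDegree = (s + 1) * Q.natDegree + Q.natDegree := by ring
      rw [h2] at hf
      have h3 : Q.natDegree ≤ (s + 1) * Q.natDegree := Nat.le_mul_of_pos_left Q.natDegree (by omega)
      omega
    obtain ⟨c, hc, hsum⟩ := ih (f /ₘ Q) hq
    refine ⟨fun j => Nat.casesOn j (f %ₘ Q) c, ?_, ?_⟩
    · rintro (_ | j) hj
      · exact degree_modByMonic_lt f hQ
      · exact hc j (by omega)
    · rw [Finset.sum_range_succ']
      show f = (∑ j ∈ Finset.range (s + 1), c j * Q ^ (j + 1)) + f %ₘ Q * Q ^ 0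
      have hQq : Q * (f /ₘ Q) = ∑ j ∈ Finset.range (s + 1), c j * Q ^ (j + 1) := by
        rw [hsum, Finset.mul_sum]
        apply Finset.sum_congr rfl; intros; ring
      rw [pow_zero, mul_one, ← hQq, add_comm]
      exact (modByMonic_add_div f Q).symm

private lemma exists_expansion (Q : Polynomial K) (hQ : Q.Monic) (hd : 0 < Q.natDegree)
    (f : Polynomial K) :
    ∃ (s : ℕ) (c : ℕ → Polynomial K), (∀ j ≤ s, (c j).degree < Q.degree) ∧
      f = ∑ j ∈ Finset.range (s + 1), c j * Q ^ j := by
  refine ⟨f.natDegree, ?_⟩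
  apply exists_expansion_aux Q hQ hd
  calc f.natDegree < f.natDegree + 1 := Nat.lt_succ_self _
    _ = (f.natDegree + 1) * 1 := by ring
    _ ≤ (f.natDegree + 1) * Q.natDegree := Nat.mul_le_mul_left _ hd


/-- Let `ρ < μ`, `ρ < ν` and `μ ≤ ν` be valuations on `K[y]` with
the strictly positive values of `ρ` well-ordered.  Suppose `Q ∈ Φ_ρ(ν)` satisfies
`ν(Q) = β_ρ(ν)` and `μ(Q) = ν(Q)`.  Then `d_ρ(μ) = d_ρ(ν)`, the set `Ψ_ρ(μ)` has
least element `μ(Q)` (so `β_ρ(μ) = β_ρ(ν)`), and the truncations of `μ` and of `ν`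
with respect to `Q` coincide. -/
theorem equal_truncations_of_comparable_valuations
    (ρ μ ν : PolyValuation K)
    (hρμ : ∀ f : Polynomial K, ρ.v f ≤ μ.v f) (hρμne : ρ.v ≠ μ.v)
    (hρν : ∀ f : Polynomial K, ρ.v f ≤ ν.v f) (hρνne : ρ.v ≠ ν.v)
    (hμν : ∀ f : Polynomial K, μ.v f ≤ ν.v f)
    (hwf : PosValuesWF ρ)
    (Q : Polynomial K) (hQ : Q ∈ Phi ρ ν) (hQval : ν.v Q = betaMN ρ ν)
    (hQeq : μ.v Q = ν.v Q) :
    dmn ρ μ = dmn ρ ν ∧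
    (μ.v Q ∈ Psi ρ μ ∧ ∀ γ ∈ Psi ρ μ, μ.v Q ≤ γ) ∧
    betaMN ρ μ = betaMN ρ ν ∧
    ∀ (wμ wν : Polynomial K → EReal),
      IsTruncation μ Q wμ → IsTruncation ν Q wν →
      ∀ f : Polynomial K, wμ f = wν f := by
  obtain ⟨hQm, hQdeg, hQlt⟩ := hQ
  have hμQ : ρ.v Q < μ.v Q := hQeq ▸ hQlt
  -- d := dmn ρ ν ≥ 1
  have hd1 : 0 < dmn ρ ν := by
    rcases Nat.eq_zero_or_pos (dmn ρ ν) with h0 | h; swap; · exact h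
    exfalso
    have : Q = 1 := hQm.natDegree_eq_zero.mp (by omega)
    rw [this, ρ.map_one, ν.map_one] at hQlt
    exact lt_irrefl _ hQlt
  -- equality of degrees
  have hdle : dmn ρ μ ≤ dmn ρ ν := Nat.sInf_le ⟨Q, hQm, hQdeg, hμQ⟩
  have hdge : dmn ρ ν ≤ dmn ρ μ := by
    have hne : {n : ℕ | ∃ f : Polynomial K, f.Monic ∧ f.natDegree = n ∧ ρ.v f < μ.v f}.Nonempty :=
      ⟨Q.natDegree, Q, hQm, rfl, hμQ⟩
    obtain ⟨g, hgm, hgd, hglt⟩ := Nat.sInf_mem hne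
    exact Nat.sInf_le ⟨g, hgm, hgd, lt_of_lt_of_le hglt (hμν g)⟩
  have hdeq : dmn ρ μ = dmn ρ ν := le_antisymm hdle hdge
  -- μ and ν agree below degree d
  have hlow : ∀ f : Polynomial K, f.natDegree < dmn ρ ν → μ.v f = ν.v f := by
    intro f hf
    have h1 := low_deg_eq ρ ν hρν f hf
    exact le_antisymm (hμν f) (h1 ▸ hρμ f)
  -- μ Q is the least element of Psi ρ μ
  have hmem : μ.v Q ∈ Psi ρ μ := ⟨Q, ⟨hQm, hQdeg.trans hdeq.symm, hμQ⟩, rfl⟩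
  have hleast : ∀ γ ∈ Psi ρ μ, μ.v Q ≤ γ := by
    rintro γ ⟨Q', ⟨hQ'm, hQ'deg, hQ'lt⟩, rfl⟩
    have hQ'ν : ν.v Q ≤ ν.v Q' := by
      rw [hQval]
      exact sInf_le ⟨Q', ⟨hQ'm, hQ'deg.trans hdeq, lt_of_lt_of_le hQ'lt (hμν Q')⟩, rfl⟩
    rcases eq_or_ne Q' Q with rfl | hne
    · exact le_refl _
    · set h := Q' - Q with hh
      have hh0 : h ≠ 0 := sub_ne_zero_of_ne hne
      have hdQ' : Q'.degree = Q.degree := by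
        rw [Polynomial.degree_eq_natDegree hQ'm.ne_zero, Polynomial.degree_eq_natDegree hQm.ne_zero,
          hQ'deg, hdeq, hQdeg]
      have hhdeg : h.natDegree < dmn ρ ν := by
        have hsub : (Q' - Q).degree < Q'.degree :=
          Polynomial.degree_sub_lt hdQ' hQ'm.ne_zero
            (by rw [hQ'm.leadingCoeff, hQm.leadingCoeff])
        have hnd : h.natDegree < Q'.natDegree := natDegree_lt_natDegree hh0 (hh ▸ hsub)
        rw [hQ'deg, hdeq] at hnd
        exact hnd
      have hhμν : μ.v h = ν.v h := hlow h hhdeg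
      by_contra hcon
      push_neg at hcon
      -- μ Q' < μ Q
      have hmin1 : min (μ.v h) (μ.v Q) ≤ μ.v Q' := by
        have h2 : h + Q = Q' := by rw [hh]; ring
        have := μ.add_ge h Q
        rwa [h2] at this
      have hμh : μ.v h ≤ μ.v Q' := by
        rcases le_total (μ.v h) (μ.v Q) with h2 | h2
        · rwa [min_eq_left h2] at hmin1
        · rw [min_eq_right h2] at hmin1
          exact absurd hmin1 (not_le.mpr hcon)
      -- but ν h ≥ ν Q
      have hνh : ν.v Q ≤ ν.v h := by
        have hmin2 : min (ν.v Q') (ν.v (-Q)) ≤ ν.v (Q' + -Q) := ν.add_ge Q' (-Q)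
        have h2 : Q' + -Q = h := by rw [hh]; ring
        rw [h2, val_neg] at hmin2
        exact le_trans (le_min hQ'ν (le_refl _)) hmin2
      have hfin : μ.v Q ≤ μ.v Q' := by
        calc μ.v Q = ν.v Q := hQeq
          _ ≤ ν.v h := hνh
          _ = μ.v h := hhμν.symm
          _ ≤ μ.v Q' := hμh
      exact absurd hfin (not_le.mpr hcon)
  have hbeta : betaMN ρ μ = betaMN ρ ν := by
    have h1 : betaMN ρ μ = μ.v Q := le_antisymm (sInf_le hmem) (le_sInf hleast)
    rw [h1, hQeq, hQval]
  refine ⟨hdeq, ⟨hmem, hleast⟩, hbeta, ?_⟩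
  -- truncations coincide
  intro wμ wν hwμ hwν f
  have hdQ : 0 < Q.natDegree := hQdeg ▸ hd1
  obtain ⟨s, c, hc, hf⟩ := exists_expansion Q hQm hdQ f
  rw [hwμ f s c hc hf, hwν f s c hc hf]
  apply Finset.inf_congr rfl
  intro j hj
  have hpow : ∀ k : ℕ, μ.v (Q ^ k) = ν.v (Q ^ k) := by
    intro k
    induction k with
    | zero => simp only [pow_zero, μ.map_one, ν.map_one]
    | succ k ih => rw [pow_succ, μ.map_mul, ν.map_mul, ih, hQeq]
  have hcj : μ.v (c j) = ν.v (c j) := by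
    rcases eq_or_ne (c j) 0 with h0 | h0
    · rw [h0, μ.map_zero, ν.map_zero]
    · apply hlow
      rw [← hQdeg]
      exact natDegree_lt_natDegree h0 (hc j (Finset.mem_range_succ_iff.mp hj))
  rw [μ.map_mul, ν.map_mul, hcj, hpow]
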